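/- The centralizer of K in Aut(G) equals K; that is, every automorphism of G that commutes with all elements of K belongs to K. -/
import Mathlib


/-- The Heisenberg group `H₃(F)` of upper unitriangular 3×3 matrices over `F`,
recorded by the three free entries: `x` in position (1,2), `y` in position (2,3),
`z` in position (1,3). -/
@[ext]
structure Heis (F : Type*) where
  x : F
  y : F
  z : F
deriving DecidableEq

namespace Heis

variable {F : Type*} [Field F]

/-- Multiplication corresponding to the matrix product. -/
instance : Group (Heis F) where
  mul a b := ⟨a.x + b.x, a.y + b.y, a.z + b.z + a.x * b.y⟩
  one := ⟨0, 0, 0⟩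
  inv a := ⟨-a.x, -a.y, -a.z + a.x * a.y⟩
  mul_assoc a b c := Heis.ext
    (show a.x + b.x + c.x = a.x + (b.x + c.x) by ring)
    (show a.y + b.y + c.y = a.y + (b.y + c.y) by ring)
    (show a.z + b.z + a.x * b.y + c.z + (a.x + b.x) * c.y
        = a.z + (b.z + c.z + b.x * c.y) + a.x * (b.y + c.y) by ring)
  one_mul a := Heis.ext
    (show (0 : F) + a.x = a.x by ring)
    (show (0 : F) + a.y = a.y by ring)
    (show (0 : F) + a.z + 0 * a.y = a.z by ring)
  mul_one a := Heis.ext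
    (show a.x + 0 = a.x by ring)
    (show a.y + 0 = a.y by ring)
    (show a.z + 0 + a.x * 0 = a.z by ring)
  inv_mul_cancel a := Heis.ext
    (show -a.x + a.x = 0 by ring)
    (show -a.y + a.y = 0 by ring)
    (show -a.z + a.x * a.y + a.z + -a.x * a.y = 0 by ring)

instance [Fintype F] : Fintype (Heis F) :=
  Fintype.ofEquiv (F × F × F)
    ⟨fun p => ⟨p.1, p.2.1, p.2.2⟩, fun a => (a.x, a.y, a.z), fun _ => rfl, fun _ => rfl⟩

end Heis

/-- The element `g(x,y,z)` of the Heisenberg group. -/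
def gElt {F : Type*} (x y z : F) : Heis F := ⟨x, y, z⟩

/-- The center `Z = {g(0,0,z) : z ∈ F}` of the Heisenberg group, as a set. -/
def Zset (F : Type*) [Field F] : Set (Heis F) := {g : Heis F | g.x = 0 ∧ g.y = 0}

/-- The center `Z` as a subgroup of the Heisenberg group. -/
def Zsub (F : Type*) [Field F] : Subgroup (Heis F) where
  carrier := Zset F
  mul_mem' := fun {a b} ha hb =>
    ⟨show a.x + b.x = 0 by rw [ha.1, hb.1, add_zero],
     show a.y + b.y = 0 by rw [ha.2, hb.2, add_zero]⟩
  one_mem' := ⟨rfl, rfl⟩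
  inv_mem' := fun {a} ha =>
    ⟨show -a.x = 0 by rw [ha.1, neg_zero],
     show -a.y = 0 by rw [ha.2, neg_zero]⟩

/-- `γ_i(α,β) = αβ/2 + (α² − εβ²)i`. -/
def gam {F : Type*} [Field F] (ε i α β : F) : F := α * β / 2 + (α ^ 2 - ε * β ^ 2) * i

/-- `Y_i = {g(α, β, γ_i(α,β)) : (α,β) ≠ (0,0)}`. -/
def Yset {F : Type*} [Field F] (ε i : F) : Set (Heis F) :=
  {g : Heis F | ∃ α β : F, (α, β) ≠ (0, 0) ∧ g = gElt α β (gam ε i α β)}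

/-- `X_i = Y_i ∪ {e}`. -/
def Xset {F : Type*} [Field F] (ε i : F) : Set (Heis F) := Yset ε i ∪ {1}

/-- The map `ρ(M) : G → G` attached to the matrix `M = [[α,β],[εβ,α]]`. -/
def rho {F : Type*} [Field F] (ε α β : F) : Heis F → Heis F := fun g =>
  gElt (α * g.x + ε * β * g.y) (β * g.x + α * g.y)
    (α * β * (g.x ^ 2 / 2 + ε * g.y ^ 2 / 2) + ε * β ^ 2 * g.x * g.y
      + (α ^ 2 - ε * β ^ 2) * g.z)

/-- `K = {ρ(M) : M = [[α,β],[εβ,α]], (α,β) ≠ (0,0)}`, as a set of maps `G → G`. -/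
def Kset {F : Type*} [Field F] (ε : F) : Set (Heis F → Heis F) :=
  {f | ∃ α β : F, (α, β) ≠ (0, 0) ∧ f = rho ε α β}

/-- The family of sets `{e}`, `Z \ {e}`, `Y_i` for `i ∈ F`. -/
def SFam {F : Type*} [Field F] (ε : F) : Set (Set (Heis F)) :=
  insert {1} (insert (Zset F \ {1}) {S | ∃ i : F, S = Yset ε i})

/-- `f` preserves each of the basic sets `{e}`, `Z \ {e}`, `Y_i`:
`hg⁻¹ ∈ S ↔ f(h)f(g)⁻¹ ∈ S`. -/
def Preserves {F : Type*} [Field F] (ε : F) (f : Heis F → Heis F) : Prop :=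
  ∀ S ∈ SFam ε, ∀ g h : Heis F, h * g⁻¹ ∈ S ↔ f h * (f g)⁻¹ ∈ S

/-- The set of permutations of `G` of the form `x ↦ σ(x)·c` with `σ ∈ K`, `c ∈ G`. -/
def Aset {F : Type*} [Field F] (ε : F) : Set (Equiv.Perm (Heis F)) :=
  {f | ∃ σ ∈ Kset ε, ∃ c : Heis F, ∀ x : Heis F, f x = σ x * c}

/-- The operation `ψ` on `F ∪ {∞}`, with `∞` encoded as `none`. -/
def psi {F : Type*} [Field F] [DecidableEq F] (ε : F) : Option F → Option F → Option F
  | none, j => j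
  | some i, none => some i
  | some i, some j => if i + j = 0 then none else some ((i * j + ε / 16) / (i + j))

/-- `Y_k` for `k ∈ F ∪ {∞}`, where `Y_∞ = Z \ {e}`. -/
def YInf {F : Type*} [Field F] (ε : F) : Option F → Set (Heis F)
  | some i => Yset ε i
  | none => Zset F \ {1}


section AuxLemmas

variable {F : Type*} [Field F]

lemma heis_mul_def (a b : Heis F) :
    a * b = (⟨a.x + b.x, a.y + b.y, a.z + b.z + a.x * b.y⟩ : Heis F) := rfl

lemma heis_inv_def (a : Heis F) :
    a⁻¹ = (⟨-a.x, -a.y, -a.z + a.x * a.y⟩ : Heis F) := rfl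

lemma heis_one_def : (1 : Heis F) = (⟨0, 0, 0⟩ : Heis F) := rfl

lemma two_ne_zero_of_odd_card {F : Type*} [Field F] [Fintype F]
    (hodd : Odd (Fintype.card F)) : (2 : F) ≠ 0 := by
  intro h2
  have h : ringChar F ∣ 2 := (CharP.cast_eq_zero_iff F (ringChar F) 2).mp (by exact_mod_cast h2)
  rcases (Nat.dvd_prime Nat.prime_two).mp h with h1 | h1
  · exact CharP.ringChar_ne_one h1
  · have hc := FiniteField.even_card_of_char_two h1
    have h3 := Nat.odd_iff.mp hodd
    omega

end AuxLemmas

/-- The centralizer of `K` in `Aut(G)` equals `K`; that is, every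
automorphism of `G` that commutes with all elements of `K` belongs to `K` (and
conversely). -/
theorem statement_13 {F : Type*} [Field F] [Fintype F]
    (hodd : Odd (Fintype.card F)) (ε : F) (hε : ¬IsSquare ε) :
    {τ : MulAut (Heis F) | ∀ σ ∈ Kset ε, ⇑τ ∘ σ = σ ∘ ⇑τ} =
      {τ : MulAut (Heis F) | (⇑τ : Heis F → Heis F) ∈ Kset ε} := by
  have h2 : (2 : F) ≠ 0 := two_ne_zero_of_odd_card hodd
  ext τ
  simp only [Set.mem_setOf_eq]
  constructor
  · intro hτ
    set A : Heis F := τ ⟨1, 0, 0⟩ with hA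
    have hcomm : ∀ a b : F, (a, b) ≠ ((0 : F), (0 : F)) →
        ∀ g : Heis F, τ (rho ε a b g) = rho ε a b (τ g) := by
      intro a b hab g
      exact congrFun (hτ _ ⟨a, b, hab, rfl⟩) g
    have rho1 : ∀ a b : F, rho ε a b ⟨1, 0, 0⟩ = (⟨a, b, a * b / 2⟩ : Heis F) := by
      intro a b
      refine Heis.ext ?_ ?_ ?_ <;> simp only [rho, gElt] <;>
        first | ring | (field_simp [h2]; ring)
    -- the action of `τ` on the center
    have hz0 : ∀ z : F, τ ⟨0, 0, z⟩ = (⟨0, 0, (A.x ^ 2 - ε * A.y ^ 2) * z⟩ : Heis F) := by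
      intro z
      by_cases hzz : z = 0
      · subst hzz
        have h0 : (⟨0, 0, (0 : F)⟩ : Heis F) = 1 := rfl
        rw [h0, map_one, heis_one_def]
        refine Heis.ext ?_ ?_ ?_ <;> simp
      · have hab : ((0 : F), z) ≠ ((0 : F), (0 : F)) := by simp [hzz]
        have hBc := hcomm 0 z hab ⟨1, 0, 0⟩
        rw [rho1] at hBc
        have e0 : (0 : F) * z / 2 = 0 := by ring
        rw [e0] at hBc
        have hcommutator : (⟨0, 0, z⟩ : Heis F) =
            ⟨1, 0, 0⟩ * ⟨0, z, 0⟩ * (⟨1, 0, 0⟩ : Heis F)⁻¹ * (⟨0, z, 0⟩ : Heis F)⁻¹ := by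
          refine Heis.ext ?_ ?_ ?_ <;> simp [heis_mul_def, heis_inv_def] <;> ring
        rw [hcommutator, map_mul, map_mul, map_mul, map_inv, map_inv, hBc, ← hA]
        refine Heis.ext ?_ ?_ ?_ <;> simp [heis_mul_def, heis_inv_def, rho, gElt] <;> ring
    -- coordinates of τ on non-central elements
    have key : ∀ a b z : F, (a, b) ≠ ((0 : F), (0 : F)) →
        τ ⟨a, b, z⟩ = rho ε a b A * (⟨0, 0, (A.x ^ 2 - ε * A.y ^ 2) * (z - a * b / 2)⟩ : Heis F) := by
      intro a b z hab
      have h1 := hcomm a b hab ⟨1, 0, 0⟩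
      rw [rho1, ← hA] at h1
      have hd : (⟨a, b, z⟩ : Heis F) = ⟨a, b, a * b / 2⟩ * ⟨0, 0, z - a * b / 2⟩ := by
        refine Heis.ext ?_ ?_ ?_ <;> simp [heis_mul_def] <;> ring
      rw [hd, map_mul, h1, hz0]
    have keyx : ∀ a b z : F, (a, b) ≠ ((0 : F), (0 : F)) →
        (τ ⟨a, b, z⟩).x = a * A.x + ε * b * A.y := by
      intro a b z hab
      rw [key a b z hab]
      simp [heis_mul_def, rho, gElt]
    have keyy : ∀ a b z : F, (a, b) ≠ ((0 : F), (0 : F)) →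
        (τ ⟨a, b, z⟩).y = b * A.x + a * A.y := by
      intro a b z hab
      rw [key a b z hab]
      simp [heis_mul_def, rho, gElt]
    -- the z-coordinate on elements with z = 0
    have wval : ∀ a b : F, (a, b) ≠ ((0 : F), (0 : F)) →
        (τ ⟨a, b, 0⟩).z = A.x * A.y * (a ^ 2 / 2 + ε * b ^ 2 / 2) + ε * A.y ^ 2 * a * b := by
      intro a b hab
      have hm1 : ((-1 : F), (0 : F)) ≠ ((0 : F), (0 : F)) := by
        simp
      have hneg := hcomm (-1) 0 hm1 ⟨a, b, 0⟩
      have hr : rho ε (-1) 0 (⟨a, b, 0⟩ : Heis F) = (⟨-a, -b, 0⟩ : Heis F) := by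
        refine Heis.ext ?_ ?_ ?_ <;> simp only [rho, gElt] <;>
        first | ring | (field_simp [h2]; ring)
      rw [hr] at hneg
      have hnegz : (τ ⟨-a, -b, 0⟩).z = (τ ⟨a, b, 0⟩).z := by
        rw [hneg]; simp [rho, gElt]
      have hnegy : (τ ⟨-a, -b, 0⟩).y = -(τ ⟨a, b, 0⟩).y := by
        rw [hneg]; simp [rho, gElt]
      have hprod : (⟨a, b, 0⟩ : Heis F) * (⟨-a, -b, 0⟩ : Heis F) = (⟨0, 0, -(a * b)⟩ : Heis F) := by
        refine Heis.ext ?_ ?_ ?_ <;> simp [heis_mul_def] <;> ring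
      have heq : τ (⟨a, b, 0⟩ : Heis F) * τ (⟨-a, -b, 0⟩ : Heis F)
          = (⟨0, 0, (A.x ^ 2 - ε * A.y ^ 2) * (-(a * b))⟩ : Heis F) := by
        rw [← map_mul, hprod, hz0]
      have heqz := congrArg Heis.z heq
      simp only [heis_mul_def] at heqz
      rw [hnegz, hnegy] at heqz
      rw [keyx a b 0 hab, keyy a b 0 hab] at heqz
      field_simp
      linear_combination heqz
    refine ⟨A.x, A.y, ?_, ?_⟩
    · intro hc
      have hx0 : A.x = 0 := by simpa using congrArg Prod.fst hc
      have hy0 : A.y = 0 := by simpa using congrArg Prod.snd hc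
      have h1 : τ ⟨0, 0, 1⟩ = τ 1 := by
        rw [hz0, map_one, heis_one_def]
        refine Heis.ext ?_ ?_ ?_ <;> simp [hx0, hy0]
      have h3 := τ.injective h1
      rw [heis_one_def] at h3
      have := congrArg Heis.z h3
      simp at this
    · funext g
      obtain ⟨gx, gy, gz⟩ := g
      by_cases hg : ((gx : F), (gy : F)) = ((0 : F), (0 : F))
      · have hgx : gx = 0 := by simpa using congrArg Prod.fst hg
        have hgy : gy = 0 := by simpa using congrArg Prod.snd hg
        subst hgx hgy
        rw [hz0]
        refine Heis.ext ?_ ?_ ?_ <;> simp only [rho, gElt] <;>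
          first | ring | (field_simp [h2]; ring)
      · show τ ⟨gx, gy, gz⟩ = _
        have hk := key gx gy gz hg
        refine Heis.ext ?_ ?_ ?_
        · rw [keyx gx gy gz hg]; simp [rho, gElt]; ring
        · rw [keyy gx gy gz hg]; simp [rho, gElt]; ring
        · have hzc := congrArg Heis.z hk
          simp only [heis_mul_def] at hzc
          have hz0' := congrArg Heis.z (key gx gy 0 hg)
          simp only [heis_mul_def] at hz0'
          have hw := wval gx gy hg
          rw [hzc]
          rw [hz0'] at hw  -- hw now relates rho z-part
          simp only [rho, gElt] at hw ⊢
          linear_combination hw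
  · rintro ⟨α, β, hab, hf⟩ σ ⟨a, b, hab2, hs⟩
    subst hs
    rw [hf]
    funext g
    simp only [Function.comp_apply]
    refine Heis.ext ?_ ?_ ?_ <;> simp only [rho, gElt]
    · ring
    · ring
    · field_simp [h2]
      ring
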